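/- arXiv:2405.10328 — 3 statements merged into one kernel-verified Lean document; each statement's English description precedes it below -/
import Mathlib

section
/- Let s ≥ 1 be a natural number and let G be a finite simple graph whose edge set partitions into four classes according to the degrees of the endpoints: 4 edges whose endpoints have degrees 1 and 4; 12(s − 1) edges whose endpoints have degrees 2 and 4; 6(s² − 3s + 2) edges whose endpoints have degrees 3 and 4; and (2s³ − 12s² + 22s − 12)/3 edges whose endpoints have degrees 4 and 4. Then the first inverse Nirmala index of G satisfies IN₁(G) = √20 + 6√3·(s − 1) + √21·(s² − 3s + 2) + (√8/6)·(s³ − 6s² + 11s − 6). -/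
open Finset

lemma edge_val {V : Type*} [Fintype V] [DecidableEq V] (G : SimpleGraph V) [DecidableRel G.Adj]
    (a : ℕ) (e : Sym2 V) (he : Sym2.map (fun v => G.degree v) e = s(a, 4)) :
    Sym2.lift ⟨fun u v => Real.sqrt (1 / (G.degree u : ℝ) + 1 / (G.degree v : ℝ)),
      fun u v => by dsimp only; rw [add_comm]⟩ e = Real.sqrt (1 / (a : ℝ) + 1 / 4) := by
  induction e using Sym2.inductionOn with
  | hf u v =>
    simp only [Sym2.map_pair_eq, Sym2.eq_iff] at he
    rcases he with ⟨h1, h2⟩ | ⟨h1, h2⟩ <;> simp [h1, h2, add_comm]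

/-- First inverse Nirmala index of the diamond structure: for a graph with the degree-based
edge partition of the tetrahedral diamond structure of dimension `n`, the index
`∑_{uv ∈ E} √(1/deg u + 1/deg v)` equals
`√20 + 6√3(n−1) + √21(n²−3n+2) + (√8/6)(n³−6n²+11n−6)`. -/
theorem first_inverse_nirmala_index_diamond {V : Type*} [Fintype V] [DecidableEq V]
    (G : SimpleGraph V) [DecidableRel G.Adj] (n : ℕ) (hn : 1 ≤ n)
    (h1 : ((G.edgeFinset.filter (fun e => Sym2.map (fun v => G.degree v) e = s(1, 4))).card : ℝ) = 4)
    (h2 : ((G.edgeFinset.filter (fun e => Sym2.map (fun v => G.degree v) e = s(2, 4))).card : ℝ)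
        = 12 * ((n : ℝ) - 1))
    (h3 : ((G.edgeFinset.filter (fun e => Sym2.map (fun v => G.degree v) e = s(3, 4))).card : ℝ)
        = 6 * ((n : ℝ) ^ 2 - 3 * n + 2))
    (h4 : ((G.edgeFinset.filter (fun e => Sym2.map (fun v => G.degree v) e = s(4, 4))).card : ℝ)
        = (2 * (n : ℝ) ^ 3 - 12 * (n : ℝ) ^ 2 + 22 * n - 12) / 3)
    (hall : ∀ e ∈ G.edgeFinset,
        Sym2.map (fun v => G.degree v) e = s(1, 4) ∨ Sym2.map (fun v => G.degree v) e = s(2, 4) ∨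
        Sym2.map (fun v => G.degree v) e = s(3, 4) ∨ Sym2.map (fun v => G.degree v) e = s(4, 4)) :
    ∑ e ∈ G.edgeFinset,
        Sym2.lift ⟨fun u v => Real.sqrt (1 / (G.degree u : ℝ) + 1 / (G.degree v : ℝ)),
          fun u v => by dsimp only; rw [add_comm]⟩ e
      = Real.sqrt 20 + 6 * Real.sqrt 3 * ((n : ℝ) - 1)
        + Real.sqrt 21 * ((n : ℝ) ^ 2 - 3 * n + 2)
        + (Real.sqrt 8 / 6) * ((n : ℝ) ^ 3 - 6 * (n : ℝ) ^ 2 + 11 * n - 6) := by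
  classical
  have step : ∀ e ∈ G.edgeFinset,
      Sym2.lift ⟨fun u v => Real.sqrt (1 / (G.degree u : ℝ) + 1 / (G.degree v : ℝ)),
          fun u v => by dsimp only; rw [add_comm]⟩ e
      = (if Sym2.map (fun v => G.degree v) e = s(1, 4) then Real.sqrt (1 / (1:ℝ) + 1 / 4) else 0)
      + (if Sym2.map (fun v => G.degree v) e = s(2, 4) then Real.sqrt (1 / (2:ℝ) + 1 / 4) else 0)
      + (if Sym2.map (fun v => G.degree v) e = s(3, 4) then Real.sqrt (1 / (3:ℝ) + 1 / 4) else 0)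
      + (if Sym2.map (fun v => G.degree v) e = s(4, 4) then Real.sqrt (1 / (4:ℝ) + 1 / 4) else 0) := by
    intro e he
    rcases hall e he with h | h | h | h <;>
      rw [edge_val G _ e h] <;>
      · rw [h]
        norm_num [Sym2.eq_iff]
  rw [Finset.sum_congr rfl step]
  rw [Finset.sum_add_distrib, Finset.sum_add_distrib, Finset.sum_add_distrib,
    ← Finset.sum_filter, ← Finset.sum_filter, ← Finset.sum_filter, ← Finset.sum_filter,
    Finset.sum_const, Finset.sum_const, Finset.sum_const, Finset.sum_const]
  simp only [nsmul_eq_mul]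
  rw [h1, h2, h3, h4]
  have e1 : Real.sqrt (1 / (1:ℝ) + 1 / 4) = Real.sqrt 20 / 4 := by
    rw [show (1 / (1:ℝ) + 1 / 4) = 20 / 4 ^ 2 by norm_num, Real.sqrt_div' 20 (by norm_num),
      Real.sqrt_sq (by norm_num : (0:ℝ) ≤ 4)]
  have e2 : Real.sqrt (1 / (2:ℝ) + 1 / 4) = Real.sqrt 3 / 2 := by
    rw [show (1 / (2:ℝ) + 1 / 4) = 3 / 2 ^ 2 by norm_num, Real.sqrt_div' 3 (by norm_num),
      Real.sqrt_sq (by norm_num : (0:ℝ) ≤ 2)]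
  have e3 : Real.sqrt (1 / (3:ℝ) + 1 / 4) = Real.sqrt 21 / 6 := by
    rw [show (1 / (3:ℝ) + 1 / 4) = 21 / 6 ^ 2 by norm_num, Real.sqrt_div' 21 (by norm_num),
      Real.sqrt_sq (by norm_num : (0:ℝ) ≤ 6)]
  have e4 : Real.sqrt (1 / (4:ℝ) + 1 / 4) = Real.sqrt 8 / 4 := by
    rw [show (1 / (4:ℝ) + 1 / 4) = 8 / 4 ^ 2 by norm_num, Real.sqrt_div' 8 (by norm_num),
      Real.sqrt_sq (by norm_num : (0:ℝ) ≤ 4)]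
  rw [e1, e2, e3, e4]
  ring
end

section
/- Let s ≥ 1 be a natural number and let G be a finite simple graph whose edge set partitions into four classes according to the degrees of the endpoints: 4 edges whose endpoints have degrees 1 and 4; 12(s − 1) edges whose endpoints have degrees 2 and 4; 6(s² − 3s + 2) edges whose endpoints have degrees 3 and 4; and (2s³ − 12s² + 22s − 12)/3 edges whose endpoints have degrees 4 and 4. Let IN₂ = 8/√5 + (24/√3)·(s − 1) + (12√3/√7)·(s² − 3s + 2) + (√8/3)·(s³ − 6s² + 11s − 6) be the second inverse Nirmala index of G. Then the second inverse Nirmala entropy of G satisfies ENT_{IN₂}(G) = log(IN₂) − (1/IN₂)·[(8/√5)·log(2/√5) + 12(s − 1)·(√8/√6)·log(√8/√6) + 6(s² − 3s + 2)·(√12/√7)·log(√12/√7) + ((2s³ − 12s² + 22s − 12)/3)·√2·log(√2)]. -/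
/-!
The weight `√(ab)/√(a+b)` of an edge depends only on the degree pair `{a, b}` of its endpoints,
so every edge sum of a function of the weight splits over the four degree classes, each class
contributing its size times the value on that class. Applied to `ω` this recovers `IN₂`, and
applied to `ω log ω` it gives the bracket, since for `W = ∑ ω` the entropy is
`-∑ (ω/W) log (ω/W) = log W - (1/W) ∑ ω log ω`.
-/

open Finset

lemma neg_sum_div_mul_log_div {ι : Type*} (s : Finset ι) (w : ι → ℝ) {W : ℝ}
    (hsum : ∑ i ∈ s, w i = W) :
    -∑ i ∈ s, w i / W * Real.log (w i / W)
      = Real.log W - 1 / W * ∑ i ∈ s, w i * Real.log (w i) := by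
  -- for `W = 0` both sides vanish, since `x / 0 = 0` and `log 0 = 0`
  rcases eq_or_ne W 0 with rfl | hW
  · simp
  have hterm : ∀ i ∈ s, w i / W * Real.log (w i / W)
      = (w i * Real.log (w i) - w i * Real.log W) / W := by
    intro i _
    rcases eq_or_ne (w i) 0 with h0 | h0
    · simp [h0]
    · rw [Real.log_div h0 hW]; ring
  rw [sum_congr rfl hterm, ← sum_div, sum_sub_distrib, ← sum_mul, hsum]
  field_simp
  ring

lemma sum_comp_eq_sum_card_mul_of_mapsTo {ι κ : Type*} [DecidableEq κ] {s : Finset ι}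
    {t : Finset κ} {g : ι → κ} (h : ∀ i ∈ s, g i ∈ t) (f : κ → ℝ) :
    ∑ i ∈ s, f (g i) = ∑ j ∈ t, (#{i ∈ s | g i = j} : ℝ) * f j := by
  simp_rw [← sum_fiberwise_of_maps_to' h f, sum_const, nsmul_eq_mul]

noncomputable def secondInverseNirmalaWeight : Sym2 ℕ → ℝ :=
  Sym2.lift ⟨fun a b => Real.sqrt ((a : ℝ) * b) / Real.sqrt ((a : ℝ) + b),
    fun a b => by dsimp only; rw [mul_comm, add_comm]⟩

@[simp]
lemma secondInverseNirmalaWeight_mk (a b : ℕ) :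
    secondInverseNirmalaWeight s(a, b) = Real.sqrt ((a : ℝ) * b) / Real.sqrt ((a : ℝ) + b) :=
  rfl

lemma secondInverseNirmalaWeight_one_four :
    secondInverseNirmalaWeight s(1, 4) = 2 / Real.sqrt 5 := by
  rw [secondInverseNirmalaWeight_mk, show ((1 : ℕ) : ℝ) * (4 : ℕ) = 2 ^ 2 by norm_num,
    Real.sqrt_sq zero_le_two]
  norm_num

lemma secondInverseNirmalaWeight_two_four :
    secondInverseNirmalaWeight s(2, 4) = Real.sqrt 8 / Real.sqrt 6 := by
  norm_num

lemma secondInverseNirmalaWeight_three_four :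
    secondInverseNirmalaWeight s(3, 4) = Real.sqrt 12 / Real.sqrt 7 := by
  norm_num

lemma secondInverseNirmalaWeight_four_four : secondInverseNirmalaWeight s(4, 4) = Real.sqrt 2 := by
  rw [secondInverseNirmalaWeight_mk, div_eq_iff (by positivity), ← Real.sqrt_mul zero_le_two]
  norm_num

lemma diamond_inverseNirmalaIndex_eq (x : ℝ) :
    4 * (2 / Real.sqrt 5) + 12 * (x - 1) * (Real.sqrt 8 / Real.sqrt 6)
      + 6 * (x ^ 2 - 3 * x + 2) * (Real.sqrt 12 / Real.sqrt 7)
      + (2 * x ^ 3 - 12 * x ^ 2 + 22 * x - 12) / 3 * Real.sqrt 2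
      = 8 / Real.sqrt 5 + (24 / Real.sqrt 3) * (x - 1)
        + (12 * Real.sqrt 3 / Real.sqrt 7) * (x ^ 2 - 3 * x + 2)
        + (Real.sqrt 8 / 3) * (x ^ 3 - 6 * x ^ 2 + 11 * x - 6) := by
  have hsqrt4 : Real.sqrt 4 = 2 := by
    rw [show (4 : ℝ) = 2 ^ 2 by norm_num, Real.sqrt_sq zero_le_two]
  have hsqrt8 : Real.sqrt 8 = 2 * Real.sqrt 2 := by
    rw [show (8 : ℝ) = 4 * 2 by norm_num, Real.sqrt_mul (by norm_num), hsqrt4]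
  have hsqrt12 : Real.sqrt 12 = 2 * Real.sqrt 3 := by
    rw [show (12 : ℝ) = 4 * 3 by norm_num, Real.sqrt_mul (by norm_num), hsqrt4]
  have hsqrt6 : Real.sqrt 6 = Real.sqrt 2 * Real.sqrt 3 := by
    rw [← Real.sqrt_mul zero_le_two]; norm_num
  have h2 : Real.sqrt 2 ≠ 0 := by positivity
  rw [hsqrt8, hsqrt12, hsqrt6]
  field_simp
  ring

lemma SimpleGraph.lift_degree_eq_secondInverseNirmalaWeight {V : Type*} [Fintype V]
    (G : SimpleGraph V) [DecidableRel G.Adj] (e : Sym2 V) :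
    Sym2.lift ⟨fun u v => Real.sqrt ((G.degree u : ℝ) * (G.degree v : ℝ)) /
        Real.sqrt ((G.degree u : ℝ) + (G.degree v : ℝ)),
      fun u v => by dsimp only; rw [mul_comm, add_comm]⟩ e
      = secondInverseNirmalaWeight (e.map fun v => G.degree v) := by
  induction e using Sym2.ind with
  | _ u v => rfl

/-- Second inverse Nirmala entropy of the diamond structure: with `IN₂` the closed-form
second inverse Nirmala index, `ENT_{IN₂}(G) = log IN₂ − (1/IN₂)·[(8/√5) log(2/√5)
+ 12(n−1)(√8/√6) log(√8/√6) + 6(n²−3n+2)(√12/√7) log(√12/√7)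
+ ((2n³−12n²+22n−12)/3)√2 log √2]`. -/
theorem second_inverse_nirmala_entropy_diamond {V : Type*} [Fintype V]
    (G : SimpleGraph V) [DecidableRel G.Adj] (n : ℕ)
    (h1 : ((G.edgeFinset.filter (fun e => Sym2.map (fun v => G.degree v) e = s(1, 4))).card : ℝ) = 4)
    (h2 : ((G.edgeFinset.filter (fun e => Sym2.map (fun v => G.degree v) e = s(2, 4))).card : ℝ)
        = 12 * ((n : ℝ) - 1))
    (h3 : ((G.edgeFinset.filter (fun e => Sym2.map (fun v => G.degree v) e = s(3, 4))).card : ℝ)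
        = 6 * ((n : ℝ) ^ 2 - 3 * n + 2))
    (h4 : ((G.edgeFinset.filter (fun e => Sym2.map (fun v => G.degree v) e = s(4, 4))).card : ℝ)
        = (2 * (n : ℝ) ^ 3 - 12 * (n : ℝ) ^ 2 + 22 * n - 12) / 3)
    (hall : ∀ e ∈ G.edgeFinset,
        Sym2.map (fun v => G.degree v) e = s(1, 4) ∨ Sym2.map (fun v => G.degree v) e = s(2, 4) ∨
        Sym2.map (fun v => G.degree v) e = s(3, 4) ∨ Sym2.map (fun v => G.degree v) e = s(4, 4))
    (IN₂ : ℝ)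
    (hIN₂ : IN₂ = 8 / Real.sqrt 5 + (24 / Real.sqrt 3) * ((n : ℝ) - 1)
        + (12 * Real.sqrt 3 / Real.sqrt 7) * ((n : ℝ) ^ 2 - 3 * n + 2)
        + (Real.sqrt 8 / 3) * ((n : ℝ) ^ 3 - 6 * (n : ℝ) ^ 2 + 11 * n - 6)) :
    -∑ e ∈ G.edgeFinset,
        (Sym2.lift ⟨fun u v => Real.sqrt ((G.degree u : ℝ) * (G.degree v : ℝ)) /
            Real.sqrt ((G.degree u : ℝ) + (G.degree v : ℝ)),
          fun u v => by dsimp only; rw [mul_comm, add_comm]⟩ e / IN₂) *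
          Real.log (Sym2.lift ⟨fun u v => Real.sqrt ((G.degree u : ℝ) * (G.degree v : ℝ)) /
            Real.sqrt ((G.degree u : ℝ) + (G.degree v : ℝ)),
          fun u v => by dsimp only; rw [mul_comm, add_comm]⟩ e / IN₂)
      = Real.log IN₂ - (1 / IN₂) *
          ((8 / Real.sqrt 5) * Real.log (2 / Real.sqrt 5)
            + 12 * ((n : ℝ) - 1) * (Real.sqrt 8 / Real.sqrt 6) *
                Real.log (Real.sqrt 8 / Real.sqrt 6)
            + 6 * ((n : ℝ) ^ 2 - 3 * n + 2) * (Real.sqrt 12 / Real.sqrt 7) *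
                Real.log (Real.sqrt 12 / Real.sqrt 7)
            + ((2 * (n : ℝ) ^ 3 - 12 * (n : ℝ) ^ 2 + 22 * n - 12) / 3) * Real.sqrt 2 *
                Real.log (Real.sqrt 2)) := by
  simp only [G.lift_degree_eq_secondInverseNirmalaWeight]
  have hmaps : ∀ e ∈ G.edgeFinset, e.map (fun v => G.degree v) ∈
      ({s(1, 4), s(2, 4), s(3, 4), s(4, 4)} : Finset (Sym2 ℕ)) := by
    intro e he
    rcases hall e he with h | h | h | h <;> simp [h]
  have hclasses : ∀ f : Sym2 ℕ → ℝ, ∑ e ∈ G.edgeFinset, f (e.map fun v => G.degree v)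
      = 4 * f s(1, 4) + 12 * ((n : ℝ) - 1) * f s(2, 4)
        + 6 * ((n : ℝ) ^ 2 - 3 * n + 2) * f s(3, 4)
        + (2 * (n : ℝ) ^ 3 - 12 * (n : ℝ) ^ 2 + 22 * n - 12) / 3 * f s(4, 4) := by
    intro f
    rw [sum_comp_eq_sum_card_mul_of_mapsTo hmaps, sum_insert (by decide), sum_insert (by decide),
      sum_insert (by decide), sum_singleton, h1, h2, h3, h4, add_assoc, add_assoc]
  have hindex :
      ∑ e ∈ G.edgeFinset, secondInverseNirmalaWeight (e.map fun v => G.degree v) = IN₂ := by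
    rw [hclasses, secondInverseNirmalaWeight_one_four, secondInverseNirmalaWeight_two_four,
      secondInverseNirmalaWeight_three_four, secondInverseNirmalaWeight_four_four, hIN₂]
    exact diamond_inverseNirmalaIndex_eq n
  rw [neg_sum_div_mul_log_div _ _ hindex, hclasses fun d => secondInverseNirmalaWeight d *
      Real.log (secondInverseNirmalaWeight d), secondInverseNirmalaWeight_one_four,
    secondInverseNirmalaWeight_two_four, secondInverseNirmalaWeight_three_four,
    secondInverseNirmalaWeight_four_four]
  ring
end

section
/- Define N(s), IN₁(s), IN₂(s) as the closed-form Nirmala index expressions of the diamond structure: N(s) = 4√5 + (12s − 12)√6 + (6s² − 18s + 12)√7 + ((2s³ − 12s² + 22s − 12)/3)√8, IN₁(s) = √20 + 6√3·(s − 1) + √21·(s² − 3s + 2) + (√8/6)·(s³ − 6s² + 11s − 6), IN₂(s) = 8/√5 + (24/√3)·(s − 1) + (12√3/√7)·(s² − 3s + 2) + (√8/3)·(s³ − 6s² + 11s − 6). Then for every natural number s with 2 ≤ s ≤ 25, IN₁(s) < IN₂(s) < N(s). -/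
/-- Closed-form Nirmala index of the diamond structure of dimension `s`. -/
noncomputable def diamondNirmala (s : ℝ) : ℝ :=
  4 * Real.sqrt 5 + (12 * s - 12) * Real.sqrt 6 + (6 * s ^ 2 - 18 * s + 12) * Real.sqrt 7
    + ((2 * s ^ 3 - 12 * s ^ 2 + 22 * s - 12) / 3) * Real.sqrt 8

/-- Closed-form first inverse Nirmala index of the diamond structure of dimension `s`. -/
noncomputable def diamondInverseNirmala₁ (s : ℝ) : ℝ :=
  Real.sqrt 20 + 6 * Real.sqrt 3 * (s - 1) + Real.sqrt 21 * (s ^ 2 - 3 * s + 2)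
    + (Real.sqrt 8 / 6) * (s ^ 3 - 6 * s ^ 2 + 11 * s - 6)

/-- Closed-form second inverse Nirmala index of the diamond structure of dimension `s`. -/
noncomputable def diamondInverseNirmala₂ (s : ℝ) : ℝ :=
  8 / Real.sqrt 5 + (24 / Real.sqrt 3) * (s - 1)
    + (12 * Real.sqrt 3 / Real.sqrt 7) * (s ^ 2 - 3 * s + 2)
    + (Real.sqrt 8 / 3) * (s ^ 3 - 6 * s ^ 2 + 11 * s - 6)

/-! In the falling products `s - 1`, `(s - 1)(s - 2)`, `(s - 1)(s - 2)(s - 3)` both differences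
`IN₂ - IN₁` and `N - IN₂` have positive coefficients, except for the constant `-2√5/5` of
`IN₂ - IN₁`, which the linear term `2√3 (s - 1)` absorbs once `s ≥ 2`. The falling products are
nonnegative at every integer `s ≥ 1`; the cubic one is negative on `(2, 3)`, so integrality matters. -/

open Real

lemma eight_div_sqrt_five : 8 / √5 = 8 / 5 * √5 := by
  rw [div_eq_iff (by positivity), mul_assoc, mul_self_sqrt (by norm_num)]
  norm_num

lemma twentyfour_div_sqrt_three : 24 / √3 = 8 * √3 := by
  rw [div_eq_iff (by positivity), mul_assoc, mul_self_sqrt (by norm_num)]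
  norm_num

lemma twelve_mul_sqrt_three_div_sqrt_seven : 12 * √3 / √7 = 12 / 7 * √21 := by
  rw [div_eq_iff (by positivity), show (21 : ℝ) = 3 * 7 by norm_num, sqrt_mul (by norm_num)]
  ring_nf
  rw [sq_sqrt (by norm_num)]
  ring

lemma sqrt_twenty : √20 = 2 * √5 := by
  rw [show (20 : ℝ) = 2 ^ 2 * 5 by norm_num, sqrt_mul (by norm_num), sqrt_sq (by norm_num)]

section

variable (s : ℝ)

lemma diamondInverseNirmala₂_sub_diamondInverseNirmala₁ :
    diamondInverseNirmala₂ s - diamondInverseNirmala₁ s =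
      2 * (√3 * (s - 1) - √5 / 5) + 5 / 7 * √21 * ((s - 1) * (s - 2))
        + √8 / 6 * ((s - 1) * (s - 2) * (s - 3)) := by
  rw [diamondInverseNirmala₂, diamondInverseNirmala₁, eight_div_sqrt_five,
    twentyfour_div_sqrt_three, twelve_mul_sqrt_three_div_sqrt_seven, sqrt_twenty]
  ring

lemma diamondNirmala_sub_diamondInverseNirmala₂ :
    diamondNirmala s - diamondInverseNirmala₂ s =
      12 / 5 * √5 + (12 * √6 - 8 * √3) * (s - 1) + (6 * √7 - 12 / 7 * √21) * ((s - 1) * (s - 2))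
        + √8 / 3 * ((s - 1) * (s - 2) * (s - 3)) := by
  rw [diamondNirmala, diamondInverseNirmala₂, eight_div_sqrt_five,
    twentyfour_div_sqrt_three, twelve_mul_sqrt_three_div_sqrt_seven]
  ring

end

variable {s : ℝ}

lemma diamondInverseNirmala₁_lt_diamondInverseNirmala₂ (hs : 2 ≤ s)
    (hc : 0 ≤ (s - 1) * (s - 2) * (s - 3)) :
    diamondInverseNirmala₁ s < diamondInverseNirmala₂ s := by
  have hlin : √5 / 5 < √3 * (s - 1) := calc
    √5 / 5 < √3 := by
      rw [div_lt_iff₀ (by norm_num),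
        show √3 * 5 = √(3 * 5 ^ 2) by rw [sqrt_mul (by norm_num), sqrt_sq (by norm_num)]]
      exact sqrt_lt_sqrt (by norm_num) (by norm_num)
    _ ≤ √3 * (s - 1) := le_mul_of_one_le_right (sqrt_nonneg 3) (by linarith)
  have hquad : 0 ≤ 5 / 7 * √21 * ((s - 1) * (s - 2)) := by
    have : 0 ≤ (s - 1) * (s - 2) := mul_nonneg (by linarith) (by linarith)
    positivity
  have hcub : 0 ≤ √8 / 6 * ((s - 1) * (s - 2) * (s - 3)) := by positivity
  rw [← sub_pos, diamondInverseNirmala₂_sub_diamondInverseNirmala₁]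
  linarith

lemma diamondInverseNirmala₂_lt_diamondNirmala (hs : 1 ≤ s) (hb : 0 ≤ (s - 1) * (s - 2))
    (hc : 0 ≤ (s - 1) * (s - 2) * (s - 3)) :
    diamondInverseNirmala₂ s < diamondNirmala s := by
  have hlin : 0 ≤ (12 * √6 - 8 * √3) * (s - 1) := by
    refine mul_nonneg ?_ (by linarith)
    nlinarith [sq_sqrt (show (0 : ℝ) ≤ 3 by norm_num), sq_sqrt (show (0 : ℝ) ≤ 6 by norm_num),
      sqrt_nonneg 3, sqrt_nonneg 6]
  have hquad : 0 ≤ (6 * √7 - 12 / 7 * √21) * ((s - 1) * (s - 2)) := by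
    refine mul_nonneg ?_ hb
    nlinarith [sq_sqrt (show (0 : ℝ) ≤ 21 by norm_num), sq_sqrt (show (0 : ℝ) ≤ 7 by norm_num),
      sqrt_nonneg 21, sqrt_nonneg 7]
  have hcub : 0 ≤ √8 / 3 * ((s - 1) * (s - 2) * (s - 3)) := by positivity
  have hconst : 0 < 12 / 5 * √5 := by positivity
  rw [← sub_pos, diamondNirmala_sub_diamondInverseNirmala₂]
  linarith

lemma Nat.cast_sub_one_mul_sub_two_mul_sub_three_nonneg {n : ℕ} (hn : 1 ≤ n) :
    0 ≤ ((n : ℝ) - 1) * ((n : ℝ) - 2) * ((n : ℝ) - 3) := by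
  rcases le_or_gt n 3 with h | h
  · interval_cases n <;> norm_num
  · have h3 : (3 : ℝ) ≤ n := by exact_mod_cast h.le
    exact mul_nonneg (mul_nonneg (by linarith) (by linarith)) (by linarith)

theorem diamond_nirmala_indices_order_general (s : ℕ) (h2 : 2 ≤ s) :
    diamondInverseNirmala₁ (s : ℝ) < diamondInverseNirmala₂ (s : ℝ) ∧
    diamondInverseNirmala₂ (s : ℝ) < diamondNirmala (s : ℝ) := by
  have hs : (2 : ℝ) ≤ s := by exact_mod_cast h2
  have hb : 0 ≤ ((s : ℝ) - 1) * ((s : ℝ) - 2) := mul_nonneg (by linarith) (by linarith)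
  have hc := Nat.cast_sub_one_mul_sub_two_mul_sub_three_nonneg (by omega : 1 ≤ s)
  exact ⟨diamondInverseNirmala₁_lt_diamondInverseNirmala₂ hs hc,
    diamondInverseNirmala₂_lt_diamondNirmala (by linarith) hb hc⟩

/-- For every natural number `s` with `2 ≤ s ≤ 25`, the closed-form Nirmala indices of the
diamond structure satisfy `IN₁(s) < IN₂(s) < N(s)`. -/
theorem diamond_nirmala_indices_order (s : ℕ) (h2 : 2 ≤ s) (h25 : s ≤ 25) :
    diamondInverseNirmala₁ (s : ℝ) < diamondInverseNirmala₂ (s : ℝ) ∧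
    diamondInverseNirmala₂ (s : ℝ) < diamondNirmala (s : ℝ) :=
  diamond_nirmala_indices_order_general s h2
end
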